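/- Let f^l(θ) = (p^l)² − 4|a₂|²|a₃|² u^l where p¹ = (|a₂|²+|a₃|²)cos²(θ/2) + |a₁|²sin²(θ/2), p² = (|a₂|²+|a₃|²)sin²(θ/2) + |a₁|²cos²(θ/2), u¹ = cos⁴(θ/2), u² = sin⁴(θ/2), and |a₁|²+|a₂|²+|a₃|² = 1. Then f^l(θ) ≥ 0 for all θ and l ∈ {1,2}, and the function f(θ) = √(f¹(θ)) + √(f²(θ)) attains its minimum over [0, π] at θ = 0 and θ = π, where f(0) = f(π) = min_θ f(θ) = 1 − 2·min{|a₂|², |a₃|²}. -/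
import Mathlib


noncomputable section

/-- `p¹(θ) = (|a₂|² + |a₃|²) cos²(θ/2) + |a₁|² sin²(θ/2)`. -/
def p1 (a1 a2 a3 θ : ℝ) : ℝ :=
  (a2 + a3) * Real.cos (θ / 2) ^ 2 + a1 * Real.sin (θ / 2) ^ 2

/-- `p²(θ) = (|a₂|² + |a₃|²) sin²(θ/2) + |a₁|² cos²(θ/2)`. -/
def p2 (a1 a2 a3 θ : ℝ) : ℝ :=
  (a2 + a3) * Real.sin (θ / 2) ^ 2 + a1 * Real.cos (θ / 2) ^ 2

/-- `f¹(θ) = (p¹)² - 4|a₂|²|a₃|² cos⁴(θ/2)`. -/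
def f1 (a1 a2 a3 θ : ℝ) : ℝ :=
  p1 a1 a2 a3 θ ^ 2 - 4 * a2 * a3 * Real.cos (θ / 2) ^ 4

/-- `f²(θ) = (p²)² - 4|a₂|²|a₃|² sin⁴(θ/2)`. -/
def f2 (a1 a2 a3 θ : ℝ) : ℝ :=
  p2 a1 a2 a3 θ ^ 2 - 4 * a2 * a3 * Real.sin (θ / 2) ^ 4

/-- `f(θ) = √f¹(θ) + √f²(θ)`. -/
def f (a1 a2 a3 θ : ℝ) : ℝ :=
  Real.sqrt (f1 a1 a2 a3 θ) + Real.sqrt (f2 a1 a2 a3 θ)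

/-- With `a₁, a₂, a₃ ≥ 0` (the squared moduli) summing to `1`:
`f¹, f² ≥ 0` everywhere, `f` attains its minimum over `[0, π]` at `θ = 0`
and `θ = π`, and the minimum value is `1 - 2 min {a₂, a₃}`. -/
theorem stmt7 (a1 a2 a3 : ℝ) (ha1 : 0 ≤ a1) (ha2 : 0 ≤ a2) (ha3 : 0 ≤ a3)
    (h : a1 + a2 + a3 = 1) :
    (∀ θ : ℝ, 0 ≤ f1 a1 a2 a3 θ ∧ 0 ≤ f2 a1 a2 a3 θ) ∧
    f a1 a2 a3 0 = 1 - 2 * min a2 a3 ∧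
    f a1 a2 a3 Real.pi = 1 - 2 * min a2 a3 ∧
    (∀ θ ∈ Set.Icc 0 Real.pi, 1 - 2 * min a2 a3 ≤ f a1 a2 a3 θ) := by
  have habs : |a2 - a3| = a2 + a3 - 2 * min a2 a3 := by
    rcases le_total a2 a3 with h' | h'
    · rw [min_eq_left h', abs_of_nonpos (by linarith)]; ring
    · rw [min_eq_right h', abs_of_nonneg (by linarith)]; ring
  have hmin : 1 - 2 * min a2 a3 = |a2 - a3| + a1 := by rw [habs]; linarith
  have hd : 0 ≤ |a2 - a3| := abs_nonneg _
  have hd2 : |a2 - a3| ^ 2 = (a2 - a3) ^ 2 := sq_abs _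
  have hdle : |a2 - a3| ≤ a2 + a3 := by
    rcases le_total a2 a3 with h' | h'
    · rw [abs_of_nonpos (by linarith)]; linarith
    · rw [abs_of_nonneg (by linarith)]; linarith
  -- nonnegativity and lower bounds on the square roots, for all θ
  have key : ∀ θ : ℝ, (0 ≤ f1 a1 a2 a3 θ ∧ 0 ≤ f2 a1 a2 a3 θ) ∧
      |a2 - a3| * Real.cos (θ / 2) ^ 2 + a1 * Real.sin (θ / 2) ^ 2
        ≤ Real.sqrt (f1 a1 a2 a3 θ) ∧
      |a2 - a3| * Real.sin (θ / 2) ^ 2 + a1 * Real.cos (θ / 2) ^ 2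
        ≤ Real.sqrt (f2 a1 a2 a3 θ) := by
    intro θ
    set c := Real.cos (θ / 2) with hc
    set s := Real.sin (θ / 2) with hs
    have hcs : s ^ 2 + c ^ 2 = 1 := Real.sin_sq_add_cos_sq _
    have hc2 : (0:ℝ) ≤ c ^ 2 := sq_nonneg _
    have hs2 : (0:ℝ) ≤ s ^ 2 := sq_nonneg _
    have hb1 : (|a2 - a3| * c ^ 2 + a1 * s ^ 2) ^ 2 ≤ f1 a1 a2 a3 θ := by
      simp only [f1, p1, ← hc, ← hs]
      have expand : ((a2 + a3) * c ^ 2 + a1 * s ^ 2) ^ 2 - 4 * a2 * a3 * c ^ 4 -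
          (|a2 - a3| * c ^ 2 + a1 * s ^ 2) ^ 2 =
          2 * ((a1 * s ^ 2) * (c ^ 2 * (a2 + a3 - |a2 - a3|))) +
          c ^ 4 * ((a2 - a3) ^ 2 - |a2 - a3| ^ 2) := by ring
      have h1 : 0 ≤ (a1 * s ^ 2) * (c ^ 2 * (a2 + a3 - |a2 - a3|)) :=
        mul_nonneg (mul_nonneg ha1 hs2) (mul_nonneg hc2 (sub_nonneg.2 hdle))
      rw [hd2] at expand
      linarith [expand]
    have hb2 : (|a2 - a3| * s ^ 2 + a1 * c ^ 2) ^ 2 ≤ f2 a1 a2 a3 θ := by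
      simp only [f2, p2, ← hc, ← hs]
      have expand : ((a2 + a3) * s ^ 2 + a1 * c ^ 2) ^ 2 - 4 * a2 * a3 * s ^ 4 -
          (|a2 - a3| * s ^ 2 + a1 * c ^ 2) ^ 2 =
          2 * ((a1 * c ^ 2) * (s ^ 2 * (a2 + a3 - |a2 - a3|))) +
          s ^ 4 * ((a2 - a3) ^ 2 - |a2 - a3| ^ 2) := by ring
      have h1 : 0 ≤ (a1 * c ^ 2) * (s ^ 2 * (a2 + a3 - |a2 - a3|)) :=
        mul_nonneg (mul_nonneg ha1 hc2) (mul_nonneg hs2 (sub_nonneg.2 hdle))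
      rw [hd2] at expand
      linarith [expand]
    have hx1 : 0 ≤ |a2 - a3| * c ^ 2 + a1 * s ^ 2 :=
      add_nonneg (mul_nonneg hd hc2) (mul_nonneg ha1 hs2)
    have hx2 : 0 ≤ |a2 - a3| * s ^ 2 + a1 * c ^ 2 :=
      add_nonneg (mul_nonneg hd hs2) (mul_nonneg ha1 hc2)
    refine ⟨⟨le_trans (sq_nonneg _) hb1, le_trans (sq_nonneg _) hb2⟩, ?_, ?_⟩
    · exact (Real.le_sqrt hx1 (le_trans (sq_nonneg _) hb1)).2 hb1
    · exact (Real.le_sqrt hx2 (le_trans (sq_nonneg _) hb2)).2 hb2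
  have lb : ∀ θ : ℝ, 1 - 2 * min a2 a3 ≤ f a1 a2 a3 θ := by
    intro θ
    obtain ⟨_, h1, h2⟩ := key θ
    have hcs : Real.sin (θ / 2) ^ 2 + Real.cos (θ / 2) ^ 2 = 1 :=
      Real.sin_sq_add_cos_sq _
    have : |a2 - a3| + a1 ≤ f a1 a2 a3 θ := by
      have := add_le_add h1 h2
      calc |a2 - a3| + a1 =
          (|a2 - a3| * Real.cos (θ / 2) ^ 2 + a1 * Real.sin (θ / 2) ^ 2) +
          (|a2 - a3| * Real.sin (θ / 2) ^ 2 + a1 * Real.cos (θ / 2) ^ 2) := by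
            nlinarith [hcs]
        _ ≤ f a1 a2 a3 θ := this
    linarith [hmin ▸ this]
  have hv0 : f a1 a2 a3 0 = 1 - 2 * min a2 a3 := by
    have e1 : f1 a1 a2 a3 0 = (a2 - a3) ^ 2 := by
      simp [f1, p1]; ring
    have e2 : f2 a1 a2 a3 0 = a1 ^ 2 := by
      simp [f2, p2]
    rw [f, e1, e2, Real.sqrt_sq_eq_abs, Real.sqrt_sq ha1, hmin]
  have hvpi : f a1 a2 a3 Real.pi = 1 - 2 * min a2 a3 := by
    have e1 : f1 a1 a2 a3 Real.pi = a1 ^ 2 := by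
      simp [f1, p1, Real.cos_pi_div_two, Real.sin_pi_div_two]
    have e2 : f2 a1 a2 a3 Real.pi = (a2 - a3) ^ 2 := by
      simp [f2, p2, Real.cos_pi_div_two, Real.sin_pi_div_two]; ring
    rw [f, e1, e2, Real.sqrt_sq ha1, Real.sqrt_sq_eq_abs, hmin]; ring
  exact ⟨fun θ => (key θ).1, hv0, hvpi, fun θ _ => lb θ⟩

end
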